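/- arXiv:2202.11601 — 3 statements merged into one kernel-verified Lean document; each statement's English description precedes it below -/
import Mathlib

section
/- (Farkas-type equivalence from the proof of Lemma 6.2) Let T and Q be finite sets and let A : T × Q → ℤ be a matrix. The following are equivalent: (i) for every y : T → ℕ with y ≠ 0 there exists q ∈ Q with Σ_{t∈T} A(t,q)·y(t) ≠ 0; (ii) for every y : T → ℝ with y ≥ 0 and y ≠ 0 there exists q ∈ Q with Σ_{t∈T} A(t,q)·y(t) ≠ 0; (iii) there exists x : Q → ℝ such that Σ_{q∈Q} A(t,q)·x(q) ≤ −1 for every t ∈ T. -/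
open scoped ENNReal Classical

namespace PaperPP

/-- Population computers (Angluin-style generalization). -/
structure PopComputer (σ : Type) where
  Q : Finset σ
  δ : Finset (Multiset σ × Multiset σ)
  I : Finset σ
  O : Finset σ → Option Bool
  H : Multiset σ
  delta_mem : ∀ t ∈ δ, ∀ q ∈ t.1 + t.2, q ∈ Q
  delta_card : ∀ t ∈ δ, Multiset.card t.2 = Multiset.card t.1 ∧ 2 ≤ Multiset.card t.1
  delta_supp : ∀ t ∈ δ, ∃ a b : σ, ∀ q ∈ t.1, q = a ∨ q = b
  delta_fun : ∀ t ∈ δ, ∀ u ∈ δ, t.1 = u.1 → t.2 = u.2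
  I_sub : I ⊆ Q
  H_mem : ∀ q ∈ H, q ∈ Q ∧ q ∉ I

variable {σ : Type}

def Step (P : PopComputer σ) (C C' : Multiset σ) : Prop :=
  ∃ t ∈ P.δ, t.1 ≤ C ∧ C' = C - t.1 + t.2

def Reaches (P : PopComputer σ) : Multiset σ → Multiset σ → Prop :=
  Relation.ReflTransGen (Step P)

def Terminal (P : PopComputer σ) (C : Multiset σ) : Prop :=
  ∀ t ∈ P.δ, ¬ t.1 ≤ C

def IsInput (P : PopComputer σ) (C : Multiset σ) : Prop :=
  ∀ q ∈ C, q ∈ P.I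

def Initial (P : PopComputer σ) (CI C0 : Multiset σ) : Prop :=
  ∃ CH : Multiset σ, (∀ q ∈ CH, q ∈ P.H) ∧ P.H ≤ CH ∧ C0 = CI + CH

def ReachableConfig (P : PopComputer σ) (C : Multiset σ) : Prop :=
  ∃ CI C0, IsInput P CI ∧ Initial P CI C0 ∧ Reaches P C0 C

def IsRun (P : PopComputer σ) (f : ℕ → Multiset σ) : Prop :=
  ∀ i, Step P (f i) (f (i + 1)) ∨ (Terminal P (f i) ∧ f (i + 1) = f i)

def FairRun (P : PopComputer σ) (f : ℕ → Multiset σ) : Prop :=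
  IsRun P f ∧ ∀ C : Multiset σ, {i | Reaches P (f i) C}.Infinite → ∃ j, f j = C

def StabilizesTo [DecidableEq σ] (P : PopComputer σ) (f : ℕ → Multiset σ) (b : Bool) : Prop :=
  ∃ i, ∀ C, Reaches P (f i) C → P.O C.toFinset = some b

def HasOutput [DecidableEq σ] (P : PopComputer σ) (CI : Multiset σ) (b : Bool) : Prop :=
  ∀ C0 f, Initial P CI C0 → FairRun P f → f 0 = C0 → StabilizesTo P f b

def Decides [DecidableEq σ] (P : PopComputer σ) (φ : Multiset σ → Bool) : Prop :=
  ∀ CI, IsInput P CI → HasOutput P CI (φ CI)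

def Bounded (P : PopComputer σ) : Prop :=
  ¬ ∃ f : ℕ → Multiset σ,
      (∃ CI, IsInput P CI ∧ Initial P CI (f 0)) ∧ ∀ i, Step P (f i) (f (i + 1))

def Terminating (P : PopComputer σ) : Prop :=
  ∀ f : ℕ → Multiset σ, (∃ CI, IsInput P CI ∧ Initial P CI (f 0)) → FairRun P f →
    ∃ i, Terminal P (f i)

def Binary (P : PopComputer σ) : Prop := ∀ t ∈ P.δ, Multiset.card t.1 = 2

def ConsensusOutput [DecidableEq σ] (P : PopComputer σ) : Prop :=
  ∃ Q1 : Finset σ, Q1 ⊆ P.Q ∧ ∀ S : Finset σ, S ⊆ P.Q → S.Nonempty →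
    P.O S = if S ⊆ Q1 then some true else if S ⊆ P.Q \ Q1 then some false else none

def MarkedConsensusOutput [DecidableEq σ] (P : PopComputer σ) : Prop :=
  ∃ Q0 Q1 : Finset σ, Q0 ⊆ P.Q ∧ Q1 ⊆ P.Q ∧ Disjoint Q0 Q1 ∧
    ∀ S : Finset σ, S ⊆ P.Q → S.Nonempty →
      P.O S = if (S ∩ Q1).Nonempty ∧ S ∩ Q0 = ∅ then some true
        else if (S ∩ Q0).Nonempty ∧ S ∩ Q1 = ∅ then some false else none

def IsProtocol [DecidableEq σ] (P : PopComputer σ) : Prop :=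
  Binary P ∧ P.H = 0 ∧ ConsensusOutput P

/-! Boolean circuits, used to measure the size of output functions. -/

inductive Circ (α : Type) : Type where
  | inp : α → Circ α
  | tru : Circ α
  | fal : Circ α
  | neg : Circ α → Circ α
  | conj : Circ α → Circ α → Circ α
  | disj : Circ α → Circ α → Circ α

def Circ.eval {α : Type} (v : α → Bool) : Circ α → Bool
  | .inp a => v a
  | .tru => true
  | .fal => false
  | .neg c => !(Circ.eval v c)
  | .conj c d => Circ.eval v c && Circ.eval v d
  | .disj c d => Circ.eval v c || Circ.eval v d

def Circ.gates {α : Type} : Circ α → ℕ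
  | .inp _ => 1
  | .tru => 1
  | .fal => 1
  | .neg c => Circ.gates c + 1
  | .conj c d => Circ.gates c + Circ.gates d + 1
  | .disj c d => Circ.gates c + Circ.gates d + 1

noncomputable def outSize [DecidableEq σ] (P : PopComputer σ) : ℕ :=
  sInf {n | ∃ cd cv : Circ σ, Circ.gates cd + Circ.gates cv = n ∧
    ∀ S : Finset σ, S ⊆ P.Q →
      P.O S = if Circ.eval (fun q => decide (q ∈ S)) cd then
          some (Circ.eval (fun q => decide (q ∈ S)) cv) else none}

noncomputable def csize [DecidableEq σ] (P : PopComputer σ) : ℕ :=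
  P.Q.card + Multiset.card P.H + outSize P + ∑ t ∈ P.δ, Multiset.card t.1

noncomputable def asize [DecidableEq σ] (P : PopComputer σ) : ℕ :=
  P.Q.card + Multiset.card P.H + outSize P

/-! Probabilistic execution model. -/

def pairCount [DecidableEq σ] (C r : Multiset σ) : ℕ :=
  (Multiset.powersetCard 2 C).count r

noncomputable def stepKer [DecidableEq σ] (P : PopComputer σ) (C C' : Multiset σ) : ℝ≥0∞ :=
  (∑ t ∈ P.δ, if t.1 ≤ C ∧ C' = C - t.1 + t.2 then (pairCount C t.1 : ℝ≥0∞) else 0) /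
      (Nat.choose (Multiset.card C) 2 : ℝ≥0∞) +
    (if C' = C then
      1 - (∑ t ∈ P.δ, (pairCount C t.1 : ℝ≥0∞)) / (Nat.choose (Multiset.card C) 2 : ℝ≥0∞)
    else 0)

noncomputable def hitKer [DecidableEq σ] (P : PopComputer σ) (A : Set (Multiset σ))
    (C C' : Multiset σ) : ℝ≥0∞ :=
  if C ∈ A then (if C' = C then 1 else 0) else stepKer P C C'

noncomputable def hitIter [DecidableEq σ] (P : PopComputer σ) (A : Set (Multiset σ)) :
    ℕ → Multiset σ → Multiset σ → ℝ≥0∞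
  | 0, C, C' => if C' = C then 1 else 0
  | n + 1, C, C' => ∑' D : Multiset σ, hitIter P A n C D * hitKer P A D C'

/-- Expected hitting time of the set `A`, computed as `∑ₜ Pr[Xₜ ∉ A]` for the chain
absorbed at `A`. -/
noncomputable def expHit [DecidableEq σ] (P : PopComputer σ) (A : Set (Multiset σ))
    (C0 : Multiset σ) : ℝ≥0∞ :=
  ∑' n : ℕ, ∑' C : Multiset σ, if C ∈ A then 0 else hitIter P A n C0 C

def StableConfig [DecidableEq σ] (P : PopComputer σ) (C : Multiset σ) : Prop :=
  ∃ b : Bool, ∀ C', Reaches P C C' → P.O C'.toFinset = some b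

noncomputable def expTermination [DecidableEq σ] (P : PopComputer σ) (C0 : Multiset σ) : ℝ≥0∞ :=
  expHit P {C | Terminal P C} C0

noncomputable def expStabilization [DecidableEq σ] (P : PopComputer σ) (C0 : Multiset σ) : ℝ≥0∞ :=
  expHit P {C | StableConfig P C} C0

/-! Quantifier-free Presburger arithmetic. -/

inductive QFPA (v : ℕ) : Type where
  | threshold (a : Fin v → ℤ) (c : ℤ) : QFPA v
  | remainder (a : Fin v → ℤ) (θ : ℕ) (c : Fin θ) : QFPA v
  | not (φ : QFPA v) : QFPA v
  | and (φ ψ : QFPA v) : QFPA v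
  | or (φ ψ : QFPA v) : QFPA v

def QFPA.eval {v : ℕ} : QFPA v → (Fin v → ℕ) → Bool
  | .threshold a c, x => decide (c ≤ ∑ i, a i * (x i : ℤ))
  | .remainder a θ c, x => decide ((∑ i, a i * (x i : ℤ)) % (θ : ℤ) = ((c : ℕ) : ℤ))
  | .not φ, x => !(QFPA.eval φ x)
  | .and φ ψ, x => QFPA.eval φ x && QFPA.eval ψ x
  | .or φ ψ, x => QFPA.eval φ x || QFPA.eval ψ x

def zsize (z : ℤ) : ℕ := Nat.size z.natAbs + 1

def QFPA.fsize {v : ℕ} : QFPA v → ℕ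
  | .threshold a c => (∑ i, zsize (a i)) + zsize c + 1
  | .remainder a θ c => (∑ i, zsize (a i)) + Nat.size θ + Nat.size (c : ℕ) + 1
  | .not φ => QFPA.fsize φ + 1
  | .and φ ψ => QFPA.fsize φ + QFPA.fsize ψ + 1
  | .or φ ψ => QFPA.fsize φ + QFPA.fsize ψ + 1

def QFPA.double {v : ℕ} : QFPA v → QFPA (v + v)
  | .threshold a c =>
      .threshold (fun i => Fin.addCases (fun j => a j) (fun j => 2 * a j) i) c
  | .remainder a θ c =>
      .remainder (fun i => Fin.addCases (fun j => a j) (fun j => 2 * a j) i) θ c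
  | .not φ => .not (QFPA.double φ)
  | .and φ ψ => .and (QFPA.double φ) (QFPA.double ψ)
  | .or φ ψ => .or (QFPA.double φ) (QFPA.double ψ)

def inputConfig {v : ℕ} (lab : Fin v → σ) (x : Fin v → ℕ) : Multiset σ :=
  ∑ i : Fin v, Multiset.replicate (x i) (lab i)

def DecidesQFPA [DecidableEq σ] {v : ℕ} (P : PopComputer σ) (lab : Fin v → σ)
    (φ : QFPA v) : Prop :=
  Function.Injective lab ∧ P.I = Finset.univ.image lab ∧
    ∀ x : Fin v → ℕ, HasOutput P (inputConfig lab x) (QFPA.eval φ x)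

def DecidesQFPAFrom [DecidableEq σ] {v : ℕ} (P : PopComputer σ) (lab : Fin v → σ)
    (φ : QFPA v) (k : ℕ) : Prop :=
  Function.Injective lab ∧ P.I = Finset.univ.image lab ∧
    ∀ x : Fin v → ℕ, k ≤ ∑ i, x i → HasOutput P (inputConfig lab x) (QFPA.eval φ x)

/-! Potential functions and rapidness. -/

def mweight (w : σ → ℕ) (C : Multiset σ) : ℕ := (C.map w).sum

def IsPotential (P : PopComputer σ) (w : σ → ℕ) : Prop :=
  ∀ t ∈ P.δ, mweight w t.2 + (Multiset.card t.1 - 1) ≤ mweight w t.1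

def tmin [DecidableEq σ] (C r : Multiset σ) : ℕ :=
  if h : r.toFinset.Nonempty then r.toFinset.inf' h (fun q => C.count q) else 0

def speedOn [DecidableEq σ] (T : Finset (Multiset σ × Multiset σ)) (C : Multiset σ) : ℕ :=
  ∑ t ∈ T, (tmin C t.1) ^ 2

def speed [DecidableEq σ] (P : PopComputer σ) (C : Multiset σ) : ℕ := speedOn P.δ C

def RapidAt [DecidableEq σ] (P : PopComputer σ) (w : σ → ℕ) (α : ℝ) (C : Multiset σ) : Prop :=
  ∀ Cterm, Reaches P C Cterm → Terminal P Cterm →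
    ((mweight w C : ℝ) - (mweight w Cterm : ℝ)) ^ 2 / α ≤ (speed P C : ℝ)

def countIn [DecidableEq σ] (P : PopComputer σ) (C : Multiset σ) : ℕ :=
  ∑ q ∈ P.I, C.count q

def WellInitialised [DecidableEq σ] (P : PopComputer σ) (C : Multiset σ) : Prop :=
  ReachableConfig P C ∧ 3 * (countIn P C + Multiset.card P.H) ≤ 2 * Multiset.card C

def outdeg [DecidableEq σ] (P : PopComputer σ) (q : σ) : ℕ :=
  (P.δ.filter (fun t => q ∈ t.1)).card

def IsRapid [DecidableEq σ] (P : PopComputer σ) (α : ℝ) : Prop :=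
  (∃ w : σ → ℕ, IsPotential P w ∧ ∀ C, WellInitialised P C → RapidAt P w α C) ∧
  (∃ q0 : σ, ∀ q ∈ P.Q, q ≠ q0 → outdeg P q ≤ 2) ∧
  (∀ C : Multiset σ, IsInput P C → Terminal P C) ∧
  (∀ t ∈ P.δ, ∀ q ∈ P.I, t.1.count q ≤ 1 ∧ t.2.count q = 0)

def deltaGt [DecidableEq σ] (P : PopComputer σ) (w : σ → ℕ) :
    Finset (Multiset σ × Multiset σ) :=
  P.δ.filter (fun t => mweight w t.2 < mweight w t.1)

def deltaLt [DecidableEq σ] (P : PopComputer σ) (w : σ → ℕ) :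
    Finset (Multiset σ × Multiset σ) :=
  P.δ.filter (fun t => mweight w t.1 < mweight w t.2)

def RapidAtGt [DecidableEq σ] (P : PopComputer σ) (w : σ → ℕ) (α : ℝ) (C : Multiset σ) : Prop :=
  ∀ Cterm, Reaches P C Cterm → Terminal P Cterm →
    ((mweight w C : ℝ) - (mweight w Cterm : ℝ)) ^ 2 / α ≤ (speedOn (deltaGt P w) C : ℝ)

def GroupRapidAt [DecidableEq σ] (P : PopComputer σ) {e : ℕ} (w : Fin e → σ → ℕ) (α : ℝ)
    (C : Multiset σ) : Prop :=
  Terminal P C ∨ ∃ i : Fin e,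
    RapidAtGt P (w i) α C ∧
    (∃ t ∈ deltaGt P (w i), t.1 ≤ C) ∧
    (∀ C', Reaches P C C' → ∀ t ∈ deltaLt P (w i), ¬ t.1 ≤ C')

/-- Refinement between computers over the same state space. -/
def Refines [DecidableEq σ] (P' P : PopComputer σ) (π : Multiset σ → Multiset σ) : Prop :=
  (∀ C D, ReachableConfig P' C → ReachableConfig P' D → Step P' C D →
    Reaches P (π C) (π D)) ∧
  (P.I = P'.I ∧ ∀ CI C, IsInput P' CI → Initial P' CI C →
    ((∃ DI, IsInput P DI ∧ Initial P DI (π C)) ∧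
      ∀ q ∈ P.I, (π C).count q = C.count q)) ∧
  (∀ C, ReachableConfig P' C → Terminal P' C →
    Terminal P (π C) ∧ P.O (π C).toFinset = P'.O C.toFinset)

open Finset in
private theorem farkasAux : ∀ (n : ℕ) (T : Type) [Fintype T] (A : T → Fin n → ℚ) (b : T → ℚ),
    (∀ y : T → ℚ, (∀ t, 0 ≤ y t) → (∀ j, ∑ t, y t * A t j = 0) → 0 ≤ ∑ t, y t * b t) →
    ∃ x : Fin n → ℚ, ∀ t, ∑ j, A t j * x j ≤ b t := by
  intro n
  induction n with
  | zero =>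
    intro T _ A b H
    refine ⟨fun _ => 0, fun t => ?_⟩
    simp only [Finset.univ_eq_empty, Finset.sum_empty]
    classical
    have := H (fun s => if s = t then 1 else 0) (fun s => by positivity)
      (fun j => j.elim0)
    simpa using this
  | succ n ih =>
    intro T _ A b H
    classical
    set l : Fin (n + 1) := Fin.last n with hl
    set B : T ⊕ T × T → Fin n → ℚ := fun t' j =>
      match t' with
      | .inl t => if A t l = 0 then A t j.castSucc else 0
      | .inr (s, t) => if 0 < A s l ∧ A t l < 0 then
          (-(A t l)) * A s j.castSucc + A s l * A t j.castSucc else 0 with hB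
    set c : T ⊕ T × T → ℚ := fun t' =>
      match t' with
      | .inl t => if A t l = 0 then b t else 0
      | .inr (s, t) => if 0 < A s l ∧ A t l < 0 then
          (-(A t l)) * b s + A s l * b t else 0 with hc
    have H' : ∀ y' : T ⊕ T × T → ℚ, (∀ t', 0 ≤ y' t') → (∀ j, ∑ t', y' t' * B t' j = 0) →
        0 ≤ ∑ t', y' t' * c t' := by
      intro y' hy'0 hy'A
      set y : T → ℚ := fun t =>
        (if A t l = 0 then y' (.inl t) else 0)
        + ∑ t'' : T, (if 0 < A t l ∧ A t'' l < 0 then y' (.inr (t, t'')) * (-(A t'' l)) else 0)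
        + ∑ s : T, (if 0 < A s l ∧ A t l < 0 then y' (.inr (s, t)) * (A s l) else 0) with hy
      have key : ∀ v : T → ℚ, ∑ t, y t * v t =
          (∑ t : T, y' (.inl t) * (if A t l = 0 then v t else 0)) +
          ∑ s : T, ∑ t : T, y' (.inr (s, t)) *
            (if 0 < A s l ∧ A t l < 0 then (-(A t l)) * v s + A s l * v t else 0) := by
        intro v
        have hS1 : ∑ t : T, (if A t l = 0 then y' (.inl t) else 0) * v t
            = ∑ t : T, y' (.inl t) * (if A t l = 0 then v t else 0) := by
          apply Finset.sum_congr rfl; intro t _; split_ifs <;> ring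
        have hR2 : ∑ s : T, ∑ t : T, y' (.inr (s, t)) *
              (if 0 < A s l ∧ A t l < 0 then (-(A t l)) * v s + A s l * v t else 0)
            = (∑ s : T, ∑ t : T,
                (if 0 < A s l ∧ A t l < 0 then y' (.inr (s, t)) * (-(A t l)) else 0) * v s)
            + (∑ s : T, ∑ t : T,
                (if 0 < A s l ∧ A t l < 0 then y' (.inr (s, t)) * (A s l) else 0) * v t) := by
          rw [← Finset.sum_add_distrib]
          apply Finset.sum_congr rfl; intro s _
          rw [← Finset.sum_add_distrib]
          apply Finset.sum_congr rfl; intro t _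
          split_ifs <;> ring
        have hswap : ∑ t : T, (∑ s : T,
              (if 0 < A s l ∧ A t l < 0 then y' (.inr (s, t)) * (A s l) else 0)) * v t
            = ∑ s : T, ∑ t : T,
              (if 0 < A s l ∧ A t l < 0 then y' (.inr (s, t)) * (A s l) else 0) * v t := by
          rw [Finset.sum_comm]
          apply Finset.sum_congr rfl; intro s _
          rw [Finset.sum_mul]
        have hmid : ∑ t : T, (∑ t'' : T,
              (if 0 < A t l ∧ A t'' l < 0 then y' (.inr (t, t'')) * (-(A t'' l)) else 0)) * v t
            = ∑ s : T, ∑ t : T,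
              (if 0 < A s l ∧ A t l < 0 then y' (.inr (s, t)) * (-(A t l)) else 0) * v s := by
          apply Finset.sum_congr rfl; intro s _
          rw [Finset.sum_mul]
        simp only [hy, add_mul, Finset.sum_add_distrib]
        rw [hS1, hR2, hswap, hmid]; ring
      have hy0 : ∀ t, 0 ≤ y t := by
        intro t
        have h1 : 0 ≤ (if A t l = 0 then y' (.inl t) else 0) := by
          split_ifs; exacts [hy'0 _, le_refl 0]
        have h2 : 0 ≤ ∑ t'' : T,
            (if 0 < A t l ∧ A t'' l < 0 then y' (.inr (t, t'')) * (-(A t'' l)) else 0) := by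
          apply Finset.sum_nonneg; intro t'' _
          split_ifs with h
          · exact mul_nonneg (hy'0 _) (by linarith [h.2])
          · exact le_refl 0
        have h3 : 0 ≤ ∑ s : T,
            (if 0 < A s l ∧ A t l < 0 then y' (.inr (s, t)) * (A s l) else 0) := by
          apply Finset.sum_nonneg; intro s _
          split_ifs with h
          · exact mul_nonneg (hy'0 _) (le_of_lt h.1)
          · exact le_refl 0
        simp only [hy]
        linarith
      have hyA : ∀ j : Fin (n + 1), ∑ t, y t * A t j = 0 := by
        intro j
        induction j using Fin.lastCases with
        | last =>
          rw [key (fun t => A t l)]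
          have e1 : ∑ t : T, y' (.inl t) * (if A t l = 0 then A t l else 0) = 0 := by
            apply Finset.sum_eq_zero; intro t _
            split_ifs with h
            · rw [h, mul_zero]
            · rw [mul_zero]
          have e2 : ∑ s : T, ∑ t : T, y' (.inr (s, t)) *
              (if 0 < A s l ∧ A t l < 0 then (-(A t l)) * A s l + A s l * A t l else 0) = 0 := by
            apply Finset.sum_eq_zero; intro s _
            apply Finset.sum_eq_zero; intro t _
            split_ifs with h
            · ring
            · rw [mul_zero]
          rw [e1, e2, add_zero]
        | cast j0 =>
          have := hy'A j0
          rw [Fintype.sum_sum_type, Fintype.sum_prod_type] at this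
          rw [key (fun t => A t j0.castSucc)]
          simp only [hB] at this
          convert this using 2
      have := H y hy0 hyA
      rw [key b] at this
      rw [Fintype.sum_sum_type, Fintype.sum_prod_type]
      simp only [hc]
      convert this using 2
    obtain ⟨x', hx'⟩ := ih (T ⊕ T × T) B c H'
    set r : T → ℚ := fun t => b t - ∑ j : Fin n, A t j.castSucc * x' j with hr
    have hzero : ∀ t, A t l = 0 → 0 ≤ r t := by
      intro t h
      have := hx' (.inl t)
      simp only [hB, hc, h, if_true, if_pos] at this
      simp only [hr]
      linarith [this]
    have hpairR : ∀ s t, 0 < A s l → A t l < 0 → 0 ≤ (-(A t l)) * r s + A s l * r t := by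
      intro s t hs ht
      have := hx' (.inr (s, t))
      simp only [hB, hc, if_pos (And.intro hs ht)] at this
      have hsum : ∑ j : Fin n, ((-(A t l)) * A s j.castSucc + A s l * A t j.castSucc) * x' j
          = (-(A t l)) * ∑ j : Fin n, A s j.castSucc * x' j
            + A s l * ∑ j : Fin n, A t j.castSucc * x' j := by
        rw [Finset.mul_sum, Finset.mul_sum, ← Finset.sum_add_distrib]
        apply Finset.sum_congr rfl; intro j _; ring
      rw [hsum] at this
      simp only [hr]
      linarith
    have hpair : ∀ s t, 0 < A s l → A t l < 0 → r t / A t l ≤ r s / A s l := by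
      intro s t hs ht
      have hq : (0 : ℚ) < -(A t l) := by linarith
      have h0 := hpairR s t hs ht
      rw [show r t / A t l = (-(r t)) / (-(A t l)) by rw [neg_div_neg_eq],
        div_le_div_iff₀ hq hs]
      nlinarith
    set Spos : Finset T := Finset.univ.filter (fun s => 0 < A s l) with hSpos
    set Sneg : Finset T := Finset.univ.filter (fun t => A t l < 0) with hSneg
    set z : ℚ := if hp : Spos.Nonempty then Spos.inf' hp (fun s => r s / A s l)
      else if hq : Sneg.Nonempty then Sneg.sup' hq (fun t => r t / A t l) else 0 with hz
    refine ⟨Fin.snoc x' z, fun t => ?_⟩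
    rw [Fin.sum_univ_castSucc]
    simp only [Fin.snoc_castSucc, Fin.snoc_last]
    have goal2 : A t l * z ≤ r t → ∑ j : Fin n, A t j.castSucc * x' j + A t l * z ≤ b t := by
      intro h; simp only [hr] at h; linarith
    apply goal2
    rcases lt_trichotomy (A t l) 0 with ht | ht | ht
    · -- lower bound row: need r t / A t l ≤ z
      have hle : r t / A t l ≤ z := by
        by_cases hp : Spos.Nonempty
        · rw [hz, dif_pos hp]
          apply Finset.le_inf'
          intro s hsmem
          have hs : 0 < A s l := by
            rw [hSpos] at hsmem; exact (Finset.mem_filter.mp hsmem).2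
          exact hpair s t hs ht
        · have hmemneg : t ∈ Sneg := by simp [hSneg, ht]
          rw [hz, dif_neg hp, dif_pos ⟨t, hmemneg⟩]
          exact Finset.le_sup' (fun t => r t / A t l) hmemneg
      calc A t l * z ≤ A t l * (r t / A t l) := by
            apply mul_le_mul_of_nonpos_left hle (le_of_lt ht)
        _ = r t := by rw [mul_comm, div_mul_cancel₀ _ (ne_of_lt ht)]
    · rw [ht, zero_mul]; exact hzero t ht
    · have hmem : t ∈ Spos := by rw [hSpos]; simp [ht]
      have hp : Spos.Nonempty := ⟨t, hmem⟩
      have hle : z ≤ r t / A t l := by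
        rw [hz, dif_pos hp]
        exact Finset.inf'_le _ hmem
      calc A t l * z ≤ A t l * (r t / A t l) := by
            exact mul_le_mul_of_nonneg_left hle (le_of_lt ht)
        _ = r t := by rw [mul_comm, div_mul_cancel₀ _ (ne_of_gt ht)]

open Finset in
private theorem farkasQ(T Q : Type) [Fintype T] [Fintype Q] (A : T → Q → ℚ) (b : T → ℚ)
    (H : ∀ y : T → ℚ, (∀ t, 0 ≤ y t) → (∀ q, ∑ t, y t * A t q = 0) → 0 ≤ ∑ t, y t * b t) :
    ∃ x : Q → ℚ, ∀ t, ∑ q, A t q * x q ≤ b t := by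
  classical
  set e := Fintype.equivFin Q with he
  obtain ⟨x', hx'⟩ := farkasAux (Fintype.card Q) T (fun t j => A t (e.symm j)) b
    (fun y h1 h2 => H y h1 (fun q => by
      have := h2 (e q); simpa using this))
  refine ⟨fun q => x' (e q), fun t => ?_⟩
  show ∑ q, A t q * x' (e q) ≤ b t
  have h2 := Equiv.sum_comp e.symm (fun q => A t q * x' (e q))
  simp only [Equiv.apply_symm_apply] at h2
  rw [← h2]
  exact hx' t

/-- Farkas-type equivalence from the proof of Lemma 6.2. -/
theorem stmt9 (T Q : Type) [Fintype T] [Fintype Q] (A : T → Q → ℤ) :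
    List.TFAE [
      ∀ y : T → ℕ, y ≠ 0 → ∃ q : Q, (∑ t, A t q * (y t : ℤ)) ≠ 0,
      ∀ y : T → ℝ, (∀ t, 0 ≤ y t) → y ≠ 0 → ∃ q : Q, (∑ t, (A t q : ℝ) * y t) ≠ 0,
      ∃ x : Q → ℝ, ∀ t, (∑ q, (A t q : ℝ) * x q) ≤ -1 ] := by
  classical
  tfae_have 1 → 3 := by
    intro h1
    by_contra h3
    have hfeas : ¬ ∃ x : Q → ℚ, ∀ t, ∑ q, (A t q : ℚ) * x q ≤ (-1 : ℚ) := by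
      rintro ⟨x, hx⟩
      apply h3
      refine ⟨fun q => (x q : ℝ), fun t => ?_⟩
      have := hx t
      have hcast : ((∑ q, (A t q : ℚ) * x q : ℚ) : ℝ) = ∑ q, (A t q : ℝ) * (x q : ℝ) := by
        push_cast; ring
      calc ∑ q, (A t q : ℝ) * (x q : ℝ) = ((∑ q, (A t q : ℚ) * x q : ℚ) : ℝ) := hcast.symm
        _ ≤ ((-1 : ℚ) : ℝ) := by exact_mod_cast this
        _ = -1 := by norm_num
    have hH : ¬ (∀ y : T → ℚ, (∀ t, 0 ≤ y t) → (∀ q, ∑ t, y t * (A t q : ℚ) = 0) →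
        0 ≤ ∑ t, y t * (-1 : ℚ)) := by
      intro H
      exact hfeas (farkasQ T Q (fun t q => (A t q : ℚ)) (fun _ => -1) H)
    push_neg at hH
    obtain ⟨y, hy0, hyA, hyb⟩ := hH
    have hsum : 0 < ∑ t, y t := by
      have h : ∑ t, y t * (-1 : ℚ) = -∑ t, y t := by
        rw [← Finset.sum_neg_distrib]
        apply Finset.sum_congr rfl; intro t _; ring
      rw [h] at hyb
      linarith
    set N : ℕ := ∏ t : T, (y t).den with hN
    have hNpos : 0 < N := Finset.prod_pos (fun t _ => (y t).pos)
    have hdvd : ∀ t : T, (y t).den ∣ N := fun t => Finset.dvd_prod_of_mem _ (Finset.mem_univ t)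
    set Y : T → ℕ := fun t => (y t).num.toNat * (N / (y t).den) with hY
    have hYcast : ∀ t, (Y t : ℚ) = (N : ℚ) * y t := by
      intro t
      have h1 : ((y t).num.toNat : ℚ) = (((y t).num : ℤ) : ℚ) := by
        exact_mod_cast congrArg (Int.cast : ℤ → ℚ)
          (Int.toNat_of_nonneg (Rat.num_nonneg.mpr (hy0 t)))
      have h2 : ((N / (y t).den : ℕ) : ℚ) = (N : ℚ) / ((y t).den : ℚ) :=
        Nat.cast_div (hdvd t) (by exact_mod_cast (y t).den_nz)
      have h3 : ((y t).num : ℚ) / ((y t).den : ℚ) = y t := Rat.num_div_den (y t)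
      have hden : ((y t).den : ℚ) ≠ 0 := by exact_mod_cast (y t).den_nz
      simp only [hY]
      rw [Nat.cast_mul, h2, h1]
      conv_rhs => rw [← h3]
      ring
    have hYne : Y ≠ 0 := by
      intro h0
      have : ∀ t, y t = 0 := by
        intro t
        have h1 : (Y t : ℚ) = 0 := by rw [congrFun h0 t]; simp
        rw [hYcast t] at h1
        have hN0 : (N : ℚ) ≠ 0 := by exact_mod_cast hNpos.ne'
        exact (mul_eq_zero.mp h1).resolve_left hN0
      have : ∑ t, y t = 0 := Finset.sum_eq_zero (fun t _ => this t)
      linarith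
    obtain ⟨q, hq⟩ := h1 Y hYne
    apply hq
    have hQ : ∑ t, (A t q : ℚ) * (Y t : ℚ) = 0 := by
      calc ∑ t, (A t q : ℚ) * (Y t : ℚ) = ∑ t, (N : ℚ) * (y t * (A t q : ℚ)) := by
            apply Finset.sum_congr rfl; intro t _; rw [hYcast t]; ring
        _ = (N : ℚ) * ∑ t, y t * (A t q : ℚ) := by rw [Finset.mul_sum]
        _ = 0 := by rw [hyA q, mul_zero]
    exact_mod_cast hQ
  tfae_have 3 → 2 := by
    rintro ⟨x, hx⟩ y hy0 hyne
    by_contra h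
    push_neg at h
    have e1 : ∑ t, y t * ∑ q, (A t q : ℝ) * x q = 0 := by
      calc ∑ t, y t * ∑ q, (A t q : ℝ) * x q
          = ∑ t, ∑ q, y t * ((A t q : ℝ) * x q) := by
            apply Finset.sum_congr rfl; intro t _; rw [Finset.mul_sum]
        _ = ∑ q, ∑ t, y t * ((A t q : ℝ) * x q) := Finset.sum_comm
        _ = ∑ q, (∑ t, (A t q : ℝ) * y t) * x q := by
            apply Finset.sum_congr rfl; intro q _
            rw [Finset.sum_mul]
            apply Finset.sum_congr rfl; intro t _; ring
        _ = 0 := Finset.sum_eq_zero (fun q _ => by rw [h q, zero_mul])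
    have e2 : ∑ t, y t * ∑ q, (A t q : ℝ) * x q ≤ ∑ t, y t * (-1 : ℝ) :=
      Finset.sum_le_sum (fun t _ => mul_le_mul_of_nonneg_left (hx t) (hy0 t))
    have e3 : ∑ t, y t * (-1 : ℝ) = -∑ t, y t := by
      rw [← Finset.sum_neg_distrib]
      apply Finset.sum_congr rfl; intro t _; ring
    have hle : ∑ t, y t ≤ 0 := by rw [e1] at e2; rw [e3] at e2; linarith
    have hzero : ∀ t ∈ Finset.univ, y t = 0 := by
      rw [← Finset.sum_eq_zero_iff_of_nonneg (fun t _ => hy0 t)]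
      have : 0 ≤ ∑ t, y t := Finset.sum_nonneg (fun t _ => hy0 t)
      linarith
    exact hyne (funext fun t => hzero t (Finset.mem_univ t))
  tfae_have 2 → 1 := by
    intro h2 y hyne
    obtain ⟨q, hq⟩ := h2 (fun t => (y t : ℝ)) (fun t => by positivity)
      (by
        intro h0
        apply hyne
        funext t
        simp only [Pi.zero_apply]
        have := congrFun h0 t
        simp only [Pi.zero_apply] at this
        exact_mod_cast this)
    refine ⟨q, fun h0 => hq ?_⟩
    have hc : ((∑ t, A t q * (y t : ℤ) : ℤ) : ℝ) = ∑ t, (A t q : ℝ) * ((y t : ℕ) : ℝ) := by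
      push_cast; ring
    rw [← hc, h0]; norm_num
  tfae_finish

end PaperPP
end

section
/- (Lemma 7.2, Refinement lemma) Let P = (Q,δ,I,O,H) and P' = (Q',δ',I',O',H') be population computers such that P' is terminating and P' refines P. Then for every predicate φ on inputs: if P decides φ, then P' decides φ. -/
open scoped ENNReal Classical

namespace PaperPP

variable {σ : Type}

private theorem terminal_reach {P : PopComputer σ} {C D : Multiset σ}
    (ht : Terminal P C) (h : Reaches P C D) : D = C := by
  induction h with
  | refl => rfl
  | tail _ hstep ih =>
    subst ih
    obtain ⟨t, ht', hle, _⟩ := hstep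
    exact absurd hle (ht t ht')

private theorem run_reaches {P : PopComputer σ} {f : ℕ → Multiset σ} (h : IsRun P f)
    {i j : ℕ} (hij : i ≤ j) : Reaches P (f i) (f j) := by
  induction j, hij using Nat.le_induction with
  | base => exact .refl
  | succ k hk ih =>
    rcases h k with hs | ⟨_, he⟩
    · exact ih.tail hs
    · rwa [he]

private theorem chain_run {P : PopComputer σ} {A B : Multiset σ} (h : Reaches P A B)
    (ht : Terminal P B) :
    ∃ g : ℕ → Multiset σ, IsRun P g ∧ g 0 = A ∧ ∃ n, ∀ m, n ≤ m → g m = B := by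
  induction h using Relation.ReflTransGen.head_induction_on with
  | refl => exact ⟨fun _ => B, fun _ => Or.inr ⟨ht, rfl⟩, rfl, 0, fun _ _ => rfl⟩
  | @head a c hstep _ ih =>
    obtain ⟨g, hg, hg0, n, hn⟩ := ih
    refine ⟨fun k => Nat.rec a (fun k _ => g k) k, ?_, rfl, n + 1, ?_⟩
    · intro i
      cases i with
      | zero => exact Or.inl (show Step P a (g 0) from hg0 ▸ hstep)
      | succ k => exact hg k
    · intro m hm
      cases m with
      | zero => omega
      | succ k => exact hn k (by omega)

private theorem const_fair {P : PopComputer σ} {g : ℕ → Multiset σ} (hg : IsRun P g)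
    {B : Multiset σ} {n : ℕ} (hB : Terminal P B) (hn : ∀ m, n ≤ m → g m = B) :
    FairRun P g := by
  refine ⟨hg, fun C hC => ?_⟩
  have hbig : ∃ i, n ≤ i ∧ Reaches P (g i) C := by
    by_contra hcon
    push_neg at hcon
    exact hC (Set.Finite.subset (Set.finite_Iio n) (fun i hi => by
      by_contra hlt
      simp only [Set.mem_Iio, not_lt] at hlt
      exact hcon i hlt hi))
  obtain ⟨i, hni, hr⟩ := hbig
  refine ⟨i, ?_⟩
  rw [hn i hni] at hr ⊢
  exact (terminal_reach hB hr).symm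

/-- Lemma 7.2: the Refinement lemma. -/
theorem stmt11 (σ : Type) [DecidableEq σ] (P P' : PopComputer σ)
    (π : Multiset σ → Multiset σ) (hterm : Terminating P')
    (href : Refines P' P π) (φ : Multiset σ → Bool) (hdec : Decides P φ) :
    Decides P' φ := by
  obtain ⟨hstep, ⟨hI, hinit2⟩, hterm3⟩ := href
  intro CI hCI C0 f hinit hfair hf0
  obtain ⟨i, hti⟩ := hterm f ⟨CI, hCI, by rw [hf0]; exact hinit⟩ hfair
  have hreach : ∀ k, ReachableConfig P' (f k) := fun k =>
    ⟨CI, C0, hCI, hinit, by rw [← hf0]; exact run_reaches hfair.1 (Nat.zero_le k)⟩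
  have hπ : ∀ k, Reaches P (π (f 0)) (π (f k)) := by
    intro k
    induction k with
    | zero => exact .refl
    | succ k ih =>
      rcases hfair.1 k with hs | ⟨_, he⟩
      · exact ih.trans (hstep _ _ (hreach k) (hreach (k + 1)) hs)
      · rwa [he]
  have hTpi := hterm3 (f i) (hreach i) hti
  obtain ⟨⟨DI, hDI, hDinit⟩, hcount⟩ := hinit2 CI C0 hCI hinit
  -- DI = CI
  obtain ⟨CH, hCH, _, hC0⟩ := hinit
  obtain ⟨DH, hDH, hDHle, hπC0⟩ := hDinit
  have hDICI : DI = CI := by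
    ext q
    by_cases hq : q ∈ P.I
    · have h1 : CH.count q = 0 :=
        Multiset.count_eq_zero.mpr fun hmem =>
          (P'.H_mem q (hCH q hmem)).2 (hI ▸ hq)
      have h2 : DH.count q = 0 :=
        Multiset.count_eq_zero.mpr fun hmem =>
          (P.H_mem q (hDH q hmem)).2 hq
      have := hcount q hq
      rw [hπC0, hC0] at this
      simp only [Multiset.count_add, h1, h2, add_zero] at this
      exact this
    · have h1 : DI.count q = 0 :=
        Multiset.count_eq_zero.mpr fun hmem => hq (hDI q hmem)
      have h2 : CI.count q = 0 :=
        Multiset.count_eq_zero.mpr fun hmem => hq (hI ▸ hCI q hmem)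
      rw [h1, h2]
  obtain ⟨g, hgrun, hg0, n, hgn⟩ := chain_run (show Reaches P (π C0) (π (f i)) by rw [← hf0]; exact hπ i) hTpi.1
  have hgfair := const_fair hgrun hTpi.1 hgn
  have hstab := hdec CI (fun q hq => hI ▸ hCI q hq) (π C0) g
    ⟨DH, hDH, hDHle, by rw [hπC0, hDICI]⟩ hgfair hg0
  obtain ⟨i0, hi0⟩ := hstab
  have hout : P.O (π (f i)).toFinset = some (φ CI) := by
    have h1 : g (max i0 n) = π (f i) := hgn _ (le_max_right _ _)
    have h2 := hi0 (g (max i0 n)) (run_reaches hgrun (le_max_left _ _))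
    rwa [h1] at h2
  refine ⟨i, fun C hC => ?_⟩
  rw [terminal_reach hti hC, ← hTpi.2]
  exact hout

end PaperPP
end

section
/- (Proposition 7.3, correctness of the preprocessing conversion) For every bounded population computer P = (Q,δ,I,O,H) and every predicate φ decided by P, there exists a bounded population computer P' = (Q',δ',I',O',H') with I' in bijection with I that decides the corresponding predicate, such that: |Q'| ≤ |Q|+|I|+1, |H'| = |H|+1, Σ_{(r↦s)∈δ'}|r| ≤ Σ_{(r↦s)∈δ}|r| + 2|I|; no state of I' occurs in the right-hand side of any transition of δ'; every configuration with support contained in I' is terminal; and r(q) ≤ 1 for every q ∈ I' and every transition (r↦s) ∈ δ'. -/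
open scoped ENNReal Classical

namespace PaperPP

variable {σ : Type}

/-! The preprocessed computer replaces each input state `q` by a fresh copy, which a single extra
helper, the converter, turns back into `q` one agent at a time. Forgetting the copies maps every
step to a step of `P` or to a stutter, and stutters strictly decrease the number of unconverted
agents, so the new computer is bounded whenever `P` is. Since the converter is never consumed, a
terminal configuration has no unconverted agents left and forgets to a terminal configuration of
`P` reachable from an initial one, which therefore carries the output `φ`. -/

section Runs

variable {σ : Type} {P : PopComputer σ}

-- `Step` subtracts with the classical `DecidableEq` instance; this restates it with any other.
lemma step_iff [DecidableEq σ] {C C' : Multiset σ} :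
    Step P C C' ↔ ∃ t ∈ P.δ, t.1 ≤ C ∧ C' = C - t.1 + t.2 := by
  unfold Step
  congr!

lemma Terminal.eq_of_reaches {C C' : Multiset σ} (ht : Terminal P C) (h : Reaches P C C') :
    C' = C := by
  rcases h.cases_head with h | ⟨_, ⟨t, htδ, hle, _⟩, _⟩
  · exact h.symm
  · exact absurd hle (ht t htδ)

lemma IsRun.reaches {f : ℕ → Multiset σ} (hf : IsRun P f) {i j : ℕ} (hij : i ≤ j) :
    Reaches P (f i) (f j) := by
  induction hij with
  | refl => exact .refl
  | step _ ih =>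
    rcases hf _ with hs | ⟨_, he⟩
    · exact ih.tail hs
    · rwa [he]

lemma exists_isRun_eventually_eq {A D : Multiset σ} (h : Reaches P A D) (hD : Terminal P D) :
    ∃ f : ℕ → Multiset σ, IsRun P f ∧ f 0 = A ∧ ∃ N, ∀ j ≥ N, f j = D := by
  induction h using Relation.ReflTransGen.head_induction_on with
  | refl => exact ⟨fun _ => D, fun _ => .inr ⟨hD, rfl⟩, rfl, 0, fun _ _ => rfl⟩
  | @head a c hac _ ih =>
    obtain ⟨f, hf, hf0, N, hfD⟩ := ih
    refine ⟨fun | 0 => a | n + 1 => f n, ?_, rfl, N + 1, ?_⟩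
    · rintro (_ | i)
      · exact .inl (show Step P a (f 0) by rwa [hf0])
      · exact hf i
    · rintro (_ | j) hj
      · omega
      · exact hfD j (by omega)

lemma FairRun.of_eventually_terminal {f : ℕ → Multiset σ} {D : Multiset σ} {N : ℕ}
    (hf : IsRun P f) (hD : Terminal P D) (hfD : ∀ j ≥ N, f j = D) : FairRun P f := by
  refine ⟨hf, fun C hC => ?_⟩
  obtain ⟨i, hi, hNi⟩ := hC.exists_gt N
  have hi : Reaches P (f i) C := hi
  rw [hfD i hNi.le] at hi
  exact ⟨i, by rw [hfD i hNi.le, hD.eq_of_reaches hi]⟩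

lemma HasOutput.output_eq_of_reaches [DecidableEq σ] {CI C0 D : Multiset σ} {b : Bool}
    (hout : HasOutput P CI b) (h0 : Initial P CI C0) (hD : Reaches P C0 D)
    (hDt : Terminal P D) : P.O D.toFinset = some b := by
  obtain ⟨f, hf, hf0, N, hfD⟩ := exists_isRun_eventually_eq hD hDt
  obtain ⟨i, hi⟩ := hout C0 f h0 (.of_eventually_terminal hf hDt hfD) hf0
  apply hi
  rw [← hfD (max i N) (le_max_right _ _)]
  exact hf.reaches (le_max_left _ _)

def Diverges (P : PopComputer σ) (C : Multiset σ) : Prop :=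
  ∃ f : ℕ → Multiset σ, f 0 = C ∧ ∀ i, Step P (f i) (f (i + 1))

lemma Diverges.of_reaches {A B : Multiset σ} (h : Reaches P A B) (hB : Diverges P B) :
    Diverges P A := by
  induction h using Relation.ReflTransGen.head_induction_on with
  | refl => exact hB
  | @head a c hac _ ih =>
    obtain ⟨f, hf0, hf⟩ := ih
    refine ⟨fun | 0 => a | n + 1 => f n, rfl, ?_⟩
    rintro (_ | i)
    · show Step P a (f 0)
      rwa [hf0]
    · exact hf i

lemma Bounded.not_diverges {CI C0 C : Multiset σ} (hb : Bounded P) (hCI : IsInput P CI)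
    (h0 : Initial P CI C0) (hC : Reaches P C0 C) : ¬ Diverges P C := by
  intro hdiv
  obtain ⟨f, hf0, hf⟩ := hdiv.of_reaches hC
  exact hb ⟨f, ⟨CI, hCI, hf0 ▸ h0⟩, hf⟩

lemma Bounded.exists_terminal {CI : Multiset σ} {f : ℕ → Multiset σ} (hb : Bounded P)
    (hCI : IsInput P CI) (h0 : Initial P CI (f 0)) (hf : IsRun P f) : ∃ N, Terminal P (f N) := by
  by_contra! hterm
  exact hb.not_diverges hCI h0 .refl
    ⟨f, rfl, fun i => (hf i).resolve_right fun h => hterm i h.1⟩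

lemma Bounded.hasOutput [DecidableEq σ] {CI : Multiset σ} {b : Bool} (hb : Bounded P)
    (hCI : IsInput P CI)
    (hterm : ∀ C0 D, Initial P CI C0 → Reaches P C0 D → Terminal P D →
      P.O D.toFinset = some b) :
    HasOutput P CI b := by
  rintro C0 f h0 hf rfl
  obtain ⟨N, hN⟩ := hb.exists_terminal hCI h0 hf.1
  exact ⟨N, fun C hC => hN.eq_of_reaches hC ▸ hterm _ _ h0 (hf.1.reaches N.zero_le) hN⟩

end Runs

section Simulation

variable {σ τ : Type} {P : PopComputer σ} {P' : PopComputer τ}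
  {π : Multiset τ → Multiset σ}

lemma Reaches.map_of_simulation
    (hstep : ∀ C C', Step P' C C' → Step P (π C) (π C') ∨ π C' = π C) {C D : Multiset τ}
    (h : Reaches P' C D) : Reaches P (π C) (π D) :=
  Relation.ReflTransGen.lift' π (fun C C' h => by
    change Reaches P (π C) (π C')
    rcases hstep C C' h with h | h
    · exact .single h
    · exact h ▸ .refl) _ _ h

/-- Since `μ` never increases and drops at every stutter, an infinite run of `P'` stutters only
finitely often, and its tail maps to an infinite run of `P`. -/
lemma Bounded.of_simulation (hb : Bounded P) (μ : Multiset τ → ℕ)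
    (hstep : ∀ C C', Step P' C C' →
      (Step P (π C) (π C') ∧ μ C' ≤ μ C) ∨ (π C' = π C ∧ μ C' < μ C))
    (hinit : ∀ CI C0, IsInput P' CI → Initial P' CI C0 →
      ∃ DI, IsInput P DI ∧ Initial P DI (π C0)) :
    Bounded P' := by
  rintro ⟨f, ⟨CI, hCI, h0⟩, hf⟩
  have hanti : Antitone (μ ∘ f) := antitone_nat_of_succ_le fun i => by
    rcases hstep _ _ (hf i) with h | h
    exacts [h.2, h.2.le]
  obtain ⟨N, hN⟩ : ∃ N, ∀ i, μ (f N) ≤ μ (f i) :=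
    ⟨_, fun i => Function.argmin_le (μ ∘ f) i⟩
  have hreach : Reaches P (π (f 0)) (π (f N)) :=
    Reaches.map_of_simulation (fun _ _ h => (hstep _ _ h).imp And.left And.left)
      (IsRun.reaches (fun i => .inl (hf i)) N.zero_le)
  obtain ⟨DI, hDI, hD0⟩ := hinit CI (f 0) hCI h0
  refine hb.not_diverges hDI hD0 hreach ⟨fun i => π (f (N + i)), rfl, fun i => ?_⟩
  refine ((hstep _ _ (hf (N + i))).resolve_right fun ⟨_, hlt⟩ => ?_).1
  exact (hN _).not_gt (hlt.trans_le (hanti (Nat.le_add_right N i)))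

lemma Bounded.hasOutput_of_simulation [DecidableEq σ] [DecidableEq τ] {CI : Multiset σ}
    {CI' : Multiset τ} {b : Bool} (hb' : Bounded P') (hout : HasOutput P CI b)
    (hCI' : IsInput P' CI')
    (hstep : ∀ C C', Step P' C C' → Step P (π C) (π C') ∨ π C' = π C)
    (hinit : ∀ C0, Initial P' CI' C0 → Initial P CI (π C0))
    (hterm : ∀ C0 C, Initial P' CI' C0 → Reaches P' C0 C → Terminal P' C →
      Terminal P (π C) ∧ P'.O C.toFinset = P.O (π C).toFinset) :
    HasOutput P' CI' b := by
  refine hb'.hasOutput hCI' fun C0 D h0 hD hDt => ?_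
  obtain ⟨hπt, hO⟩ := hterm C0 D h0 hD hDt
  rw [hO]
  exact hout.output_eq_of_reaches (hinit C0 h0) (hD.map_of_simulation hstep) hπt

end Simulation

section Encoding

variable {σ : Type}

/- In the preprocessed computer, `inCopy q` is a fresh copy of the input state `q`, `workCopy q`
plays the role of `q`, and the extra helper `converter` turns `inCopy q` into `workCopy q`. -/
abbrev inCopy (q : σ) : σ ⊕ σ ⊕ Unit := Sum.inl q
abbrev workCopy (q : σ) : σ ⊕ σ ⊕ Unit := Sum.inr (Sum.inl q)
abbrev converter : σ ⊕ σ ⊕ Unit := Sum.inr (Sum.inr ())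

def forget (C : Multiset (σ ⊕ σ ⊕ Unit)) : Multiset σ :=
  C.filterMap (Sum.elim some (Sum.elim some fun _ => none))

@[simp] lemma forget_add (A B : Multiset (σ ⊕ σ ⊕ Unit)) :
    forget (A + B) = forget A + forget B :=
  Multiset.filterMap_add _ _ _

@[simp] lemma forget_map_inCopy (A : Multiset σ) : forget (A.map inCopy) = A := by
  simp [forget, Multiset.filterMap_map]

@[simp] lemma forget_map_workCopy (A : Multiset σ) : forget (A.map workCopy) = A := by
  simp [forget, Multiset.filterMap_map, Function.comp_def]

@[simp] lemma forget_cons_converter (A : Multiset (σ ⊕ σ ⊕ Unit)) :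
    forget (converter ::ₘ A) = forget A :=
  Multiset.filterMap_cons_none _ _ rfl

@[simp] lemma forget_cons_inCopy (q : σ) (A : Multiset (σ ⊕ σ ⊕ Unit)) :
    forget (inCopy q ::ₘ A) = q ::ₘ forget A :=
  Multiset.filterMap_cons_some _ _ _ rfl

@[simp] lemma forget_cons_workCopy (q : σ) (A : Multiset (σ ⊕ σ ⊕ Unit)) :
    forget (workCopy q ::ₘ A) = q ::ₘ forget A :=
  Multiset.filterMap_cons_some _ _ _ rfl

@[simp] lemma forget_singleton_converter :
    forget ({converter} : Multiset (σ ⊕ σ ⊕ Unit)) = 0 :=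
  Multiset.filterMap_cons_none _ _ rfl

lemma forget_mono {A B : Multiset (σ ⊕ σ ⊕ Unit)} (h : A ≤ B) : forget A ≤ forget B :=
  Multiset.filterMap_le_filterMap _ h

lemma forget_sub [DecidableEq σ] {A B : Multiset (σ ⊕ σ ⊕ Unit)} (h : B ≤ A) :
    forget (A - B) = forget A - forget B := by
  conv_rhs => rw [← tsub_add_cancel_of_le h, forget_add]
  simp

lemma map_workCopy_forget_le {C : Multiset (σ ⊕ σ ⊕ Unit)} (hC : ∀ q, inCopy q ∉ C) :
    (forget C).map workCopy ≤ C := by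
  induction C using Multiset.induction_on with
  | empty => simp [forget]
  | cons x C ih =>
    have ih := ih fun q hq => hC q (Multiset.mem_cons_of_mem hq)
    rcases x with q | q | ⟨⟨⟩⟩
    · exact absurd (Multiset.mem_cons_self _ _) (hC q)
    · simpa using ih
    · simpa using ih.trans (Multiset.le_cons_self C _)

def unconverted (C : Multiset (σ ⊕ σ ⊕ Unit)) : ℕ := C.countP (·.isLeft)

@[simp] lemma unconverted_add (A B : Multiset (σ ⊕ σ ⊕ Unit)) :
    unconverted (A + B) = unconverted A + unconverted B :=
  Multiset.countP_add _ _ _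

@[simp] lemma unconverted_map_workCopy (A : Multiset σ) : unconverted (A.map workCopy) = 0 := by
  simp [unconverted, Multiset.countP_map]

end Encoding

section Preprocess

variable {σ : Type}

def liftTransition (t : Multiset σ × Multiset σ) :
    Multiset (σ ⊕ σ ⊕ Unit) × Multiset (σ ⊕ σ ⊕ Unit) :=
  (t.1.map workCopy, t.2.map workCopy)

def activation (q : σ) : Multiset (σ ⊕ σ ⊕ Unit) × Multiset (σ ⊕ σ ⊕ Unit) :=
  ({inCopy q, converter}, {workCopy q, converter})

lemma converter_mem_activation_fst (q : σ) : converter ∈ (activation q).1 := by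
  simp [activation]

lemma converter_not_mem_liftTransition_fst (t : Multiset σ × Multiset σ) :
    converter ∉ (liftTransition t).1 := by
  simp [liftTransition]

@[simp] lemma forget_activation_fst (q : σ) : forget (activation q).1 = {q} := by
  simp [activation, Multiset.insert_eq_cons]

@[simp] lemma forget_activation_snd (q : σ) : forget (activation q).2 = {q} := by
  simp [activation, Multiset.insert_eq_cons]

@[simp] lemma unconverted_activation_fst (q : σ) : unconverted (activation q).1 = 1 := by
  simp [activation, unconverted, Multiset.insert_eq_cons, Multiset.countP_cons,
    ← Multiset.cons_zero]

@[simp] lemma unconverted_activation_snd (q : σ) : unconverted (activation q).2 = 0 := by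
  simp [activation, unconverted, Multiset.insert_eq_cons, ← Multiset.cons_zero]

lemma inCopy_not_mem_liftTransition (p : σ) (t : Multiset σ × Multiset σ) :
    inCopy p ∉ (liftTransition t).1 + (liftTransition t).2 := by
  simp [liftTransition]

def preprocess [DecidableEq σ] (P : PopComputer σ) : PopComputer (σ ⊕ σ ⊕ Unit) where
  Q := P.Q.image workCopy ∪ P.I.image inCopy ∪ {converter}
  δ := P.δ.image liftTransition ∪ P.I.image activation
  I := P.I.image inCopy
  O S := P.O (forget S.val).toFinset
  H := P.H.map workCopy + {converter}
  delta_mem := by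
    simp only [Finset.mem_union, Finset.mem_image]
    rintro _ (⟨t, ht, rfl⟩ | ⟨q, hq, rfl⟩) x hx
    · simp only [liftTransition, ← Multiset.map_add, Multiset.mem_map] at hx
      obtain ⟨a, ha, rfl⟩ := hx
      exact .inl (.inl ⟨a, P.delta_mem t ht a ha, rfl⟩)
    · simp only [activation, Multiset.insert_eq_cons, Multiset.mem_add, Multiset.mem_cons,
        Multiset.mem_singleton] at hx
      rcases hx with (rfl | rfl) | (rfl | rfl)
      · exact .inl (.inr ⟨q, hq, rfl⟩)
      · simp
      · exact .inl (.inl ⟨q, P.I_sub hq, rfl⟩)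
      · simp
  delta_card := by
    simp only [Finset.mem_union, Finset.mem_image]
    rintro _ (⟨t, ht, rfl⟩ | ⟨q, hq, rfl⟩)
    · simpa [liftTransition] using P.delta_card t ht
    · simp [activation]
  delta_supp := by
    simp only [Finset.mem_union, Finset.mem_image]
    rintro _ (⟨t, ht, rfl⟩ | ⟨q, hq, rfl⟩)
    · obtain ⟨a, b, hab⟩ := P.delta_supp t ht
      refine ⟨workCopy a, workCopy b, fun x hx => ?_⟩
      obtain ⟨y, hy, rfl⟩ := Multiset.mem_map.mp hx
      simpa using hab y hy
    · exact ⟨inCopy q, converter, by simp [activation, Multiset.insert_eq_cons]⟩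
  delta_fun := by
    simp only [Finset.mem_union, Finset.mem_image]
    rintro _ (⟨t, ht, rfl⟩ | ⟨p, hp, rfl⟩) _ (⟨u, hu, rfl⟩ | ⟨q, hq, rfl⟩) h
    · have := P.delta_fun t ht u hu (by simpa [liftTransition] using congrArg forget h)
      simp [liftTransition, this]
    · exact absurd (h ▸ converter_mem_activation_fst q) (converter_not_mem_liftTransition_fst t)
    · exact absurd (h ▸ converter_mem_activation_fst p) (converter_not_mem_liftTransition_fst u)
    · have : p = q := by simpa using congrArg forget h
      rw [this]
  I_sub := Finset.subset_union_right.trans Finset.subset_union_left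
  H_mem := by
    intro x hx
    simp only [Multiset.mem_add, Multiset.mem_map, Multiset.mem_singleton] at hx
    rcases hx with ⟨q, hq, rfl⟩ | rfl
    · simp [(P.H_mem q hq).1]
    · simp

end Preprocess

section PreprocessRuns

variable {σ : Type} [DecidableEq σ] {P : PopComputer σ}

lemma mem_preprocess_δ {t : Multiset (σ ⊕ σ ⊕ Unit) × Multiset (σ ⊕ σ ⊕ Unit)} :
    t ∈ (preprocess P).δ ↔
      (∃ u ∈ P.δ, liftTransition u = t) ∨ ∃ q ∈ P.I, activation q = t := by
  simp [preprocess]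

lemma step_preprocess {C C' : Multiset (σ ⊕ σ ⊕ Unit)} (h : Step (preprocess P) C C') :
    (Step P (forget C) (forget C') ∧ unconverted C' ≤ unconverted C) ∨
      (forget C' = forget C ∧ unconverted C' < unconverted C) := by
  obtain ⟨t, ht, hle, rfl⟩ := step_iff.mp h
  have hforget : forget (C - t.1 + t.2) = forget C - forget t.1 + forget t.2 := by
    rw [forget_add, forget_sub hle]
  have hunconv :
      unconverted (C - t.1 + t.2) = unconverted C - unconverted t.1 + unconverted t.2 := by
    rw [unconverted_add, unconverted, Multiset.countP_sub hle]
    rfl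
  have hle' : forget t.1 ≤ forget C := forget_mono hle
  have hpos : unconverted t.1 ≤ unconverted C := Multiset.countP_le_of_le _ hle
  rcases mem_preprocess_δ.mp ht with ⟨u, hu, rfl⟩ | ⟨q, -, rfl⟩
  · simp only [liftTransition, forget_map_workCopy, unconverted_map_workCopy] at *
    exact .inl ⟨step_iff.mpr ⟨u, hu, hle', hforget⟩, by omega⟩
  · simp only [forget_activation_fst, forget_activation_snd, unconverted_activation_fst,
      unconverted_activation_snd] at *
    exact .inr ⟨hforget.trans (tsub_add_cancel_of_le hle'), by omega⟩

def PreprocessInv (P : PopComputer σ) (C : Multiset (σ ⊕ σ ⊕ Unit)) : Prop :=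
  converter ∈ C ∧ ∀ q, inCopy q ∈ C → q ∈ P.I

lemma PreprocessInv.step {C C' : Multiset (σ ⊕ σ ⊕ Unit)} (hC : PreprocessInv P C)
    (h : Step (preprocess P) C C') : PreprocessInv P C' := by
  obtain ⟨t, ht, hle, rfl⟩ := step_iff.mp h
  obtain ⟨hconv, hin⟩ := hC
  have hsub : C - t.1 ≤ C := Multiset.sub_le_self _ _
  rcases mem_preprocess_δ.mp ht with ⟨u, -, rfl⟩ | ⟨q, -, rfl⟩
  · refine ⟨Multiset.mem_add.mpr (.inl (Multiset.mem_sub.mpr ?_)), fun p hp => ?_⟩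
    · simpa [Multiset.count_eq_zero.mpr (converter_not_mem_liftTransition_fst u)]
        using Multiset.count_pos.mpr hconv
    · rcases Multiset.mem_add.mp hp with hp | hp
      · exact hin p (Multiset.mem_of_le hsub hp)
      · exact absurd (Multiset.mem_add.mpr (.inr hp)) (inCopy_not_mem_liftTransition p u)
  · refine ⟨by simp [activation], fun p hp => hin p (Multiset.mem_of_le hsub ?_)⟩
    simpa [activation] using hp

lemma PreprocessInv.reaches {C C' : Multiset (σ ⊕ σ ⊕ Unit)} (hC : PreprocessInv P C)
    (h : Reaches (preprocess P) C C') : PreprocessInv P C' :=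
  Relation.ReflTransGen.head_induction_on (motive := fun C _ => PreprocessInv P C → _) h id
    (fun hstep _ ih hC => ih (hC.step hstep)) hC

lemma preprocessInv_of_initial {CI C0 : Multiset (σ ⊕ σ ⊕ Unit)}
    (hCI : IsInput (preprocess P) CI) (h0 : Initial (preprocess P) CI C0) :
    PreprocessInv P C0 := by
  obtain ⟨CH, hCH, hH, rfl⟩ := h0
  refine ⟨Multiset.mem_add.mpr (.inr (Multiset.mem_of_le hH (by simp [preprocess]))),
    fun q hq => ?_⟩
  rcases Multiset.mem_add.mp hq with hq | hq
  · simpa [preprocess] using hCI _ hq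
  · simpa [preprocess] using hCH _ hq

lemma isInput_forget {CI : Multiset (σ ⊕ σ ⊕ Unit)} (hCI : IsInput (preprocess P) CI) :
    IsInput P (forget CI) := by
  intro q hq
  obtain ⟨x, hx, hxq⟩ := (Multiset.mem_filterMap _ _).mp hq
  obtain ⟨p, hp, rfl⟩ := Finset.mem_image.mp (hCI x hx)
  simp_all

lemma initial_forget {CI C0 : Multiset (σ ⊕ σ ⊕ Unit)} (h0 : Initial (preprocess P) CI C0) :
    Initial P (forget CI) (forget C0) := by
  obtain ⟨CH, hCH, hH, rfl⟩ := h0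
  refine ⟨forget CH, fun q hq => ?_, by simpa [preprocess] using forget_mono hH, forget_add _ _⟩
  obtain ⟨x, hx, hxq⟩ := (Multiset.mem_filterMap _ _).mp hq
  have hxH := hCH x hx
  simp only [preprocess, Multiset.mem_add, Multiset.mem_map, Multiset.mem_singleton] at hxH
  rcases hxH with ⟨p, hp, rfl⟩ | rfl
  · simp_all
  · simp at hxq

lemma PreprocessInv.terminal_forget {C : Multiset (σ ⊕ σ ⊕ Unit)} (hC : PreprocessInv P C)
    (ht : Terminal (preprocess P) C) : Terminal P (forget C) := by
  have hno : ∀ q, inCopy q ∉ C := by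
    intro q hq
    refine ht (activation q) (mem_preprocess_δ.mpr (.inr ⟨q, hC.2 q hq, rfl⟩)) ?_
    rw [Multiset.le_iff_subset (by simp [activation])]
    simp [activation, Multiset.insert_eq_cons, Multiset.cons_subset, hq, hC.1]
  intro t htδ hle
  exact ht (liftTransition t) (mem_preprocess_δ.mpr (.inl ⟨t, htδ, rfl⟩))
    ((Multiset.map_le_map hle).trans (map_workCopy_forget_le hno))

lemma preprocess_O_toFinset (C : Multiset (σ ⊕ σ ⊕ Unit)) :
    (preprocess P).O C.toFinset = P.O (forget C).toFinset := by
  simp only [preprocess]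
  congr 1
  ext q
  simp [forget, Multiset.mem_filterMap]

lemma bounded_preprocess (hb : Bounded P) : Bounded (preprocess P) :=
  hb.of_simulation unconverted (fun _ _ => step_preprocess)
    fun _ _ hCI h0 => ⟨_, isInput_forget hCI, initial_forget h0⟩

lemma hasOutput_preprocess {CI : Multiset σ} {b : Bool} (hb : Bounded P) (hCI : IsInput P CI)
    (hout : HasOutput P CI b) : HasOutput (preprocess P) (CI.map inCopy) b := by
  have hCI' : IsInput (preprocess P) (CI.map inCopy) := by
    intro x hx
    obtain ⟨q, hq, rfl⟩ := Multiset.mem_map.mp hx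
    exact Finset.mem_image_of_mem _ (hCI q hq)
  refine (bounded_preprocess hb).hasOutput_of_simulation hout hCI'
    (fun _ _ h => (step_preprocess h).imp And.left And.left)
    (fun C0 h0 => forget_map_inCopy CI ▸ initial_forget h0)
    fun C0 C h0 hC ht => ⟨?_, preprocess_O_toFinset C⟩
  exact ((preprocessInv_of_initial hCI' h0).reaches hC).terminal_forget ht

end PreprocessRuns

section PreprocessShape

variable {σ : Type} [DecidableEq σ] (P : PopComputer σ)

lemma card_preprocess_Q_le : (preprocess P).Q.card ≤ P.Q.card + P.I.card + 1 :=
  calc (preprocess P).Q.card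
      ≤ (P.Q.image workCopy ∪ P.I.image inCopy).card + 1 := Finset.card_union_le _ _
    _ ≤ (P.Q.image workCopy).card + (P.I.image inCopy).card + 1 := by
      gcongr; exact Finset.card_union_le _ _
    _ ≤ P.Q.card + P.I.card + 1 := by gcongr <;> exact Finset.card_image_le

lemma card_preprocess_H : Multiset.card (preprocess P).H = Multiset.card P.H + 1 := by
  simp [preprocess]

lemma sum_card_preprocess_δ_le :
    ∑ t ∈ (preprocess P).δ, Multiset.card t.1 ≤
      ∑ t ∈ P.δ, Multiset.card t.1 + 2 * P.I.card := by
  have hdisj : Disjoint (P.δ.image liftTransition) (P.I.image activation) := by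
    refine Finset.disjoint_left.mpr fun t ht ht' => ?_
    obtain ⟨u, -, rfl⟩ := Finset.mem_image.mp ht
    obtain ⟨q, -, hq⟩ := Finset.mem_image.mp ht'
    exact converter_not_mem_liftTransition_fst u (hq ▸ converter_mem_activation_fst q)
  calc ∑ t ∈ (preprocess P).δ, Multiset.card t.1
      = ∑ t ∈ P.δ.image liftTransition, Multiset.card t.1 +
          ∑ t ∈ P.I.image activation, Multiset.card t.1 := Finset.sum_union hdisj
    _ ≤ ∑ t ∈ P.δ, Multiset.card (liftTransition t).1 +
          ∑ q ∈ P.I, Multiset.card (activation q).1 := by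
      gcongr <;> exact Finset.sum_image_le_of_nonneg fun _ _ => Nat.zero_le _
    _ = ∑ t ∈ P.δ, Multiset.card t.1 + 2 * P.I.card := by
      simp [liftTransition, activation, mul_comm]

lemma input_not_mem_snd_of_mem_preprocess_δ
    {t : Multiset (σ ⊕ σ ⊕ Unit) × Multiset (σ ⊕ σ ⊕ Unit)}
    (ht : t ∈ (preprocess P).δ) {x : σ ⊕ σ ⊕ Unit} (hx : x ∈ (preprocess P).I) :
    x ∉ t.2 := by
  obtain ⟨p, -, rfl⟩ := Finset.mem_image.mp hx
  rcases mem_preprocess_δ.mp ht with ⟨u, -, rfl⟩ | ⟨q, -, rfl⟩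
  · simp [liftTransition]
  · simp [activation]

lemma count_input_fst_le_one {t : Multiset (σ ⊕ σ ⊕ Unit) × Multiset (σ ⊕ σ ⊕ Unit)}
    (ht : t ∈ (preprocess P).δ) {x : σ ⊕ σ ⊕ Unit} (hx : x ∈ (preprocess P).I) :
    t.1.count x ≤ 1 := by
  obtain ⟨p, -, rfl⟩ := Finset.mem_image.mp hx
  rcases mem_preprocess_δ.mp ht with ⟨u, -, rfl⟩ | ⟨q, -, rfl⟩
  · simp [liftTransition]
  · simp only [activation, Multiset.insert_eq_cons, Multiset.count_cons, Multiset.count_singleton]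
    split_ifs <;> simp_all

lemma terminal_of_isInput_preprocess {C : Multiset (σ ⊕ σ ⊕ Unit)}
    (hC : IsInput (preprocess P) C) : Terminal (preprocess P) C := by
  intro t ht hle
  obtain ⟨x, hx, hxI⟩ : ∃ x ∈ t.1, x ∉ (preprocess P).I := by
    rcases mem_preprocess_δ.mp ht with ⟨u, hu, rfl⟩ | ⟨q, -, rfl⟩
    · obtain ⟨a, ha⟩ := Multiset.card_pos_iff_exists_mem.mp
        (lt_of_lt_of_le two_pos (P.delta_card u hu).2)
      exact ⟨workCopy a, by simp [liftTransition, ha], by simp [preprocess]⟩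
    · exact ⟨converter, converter_mem_activation_fst q, by simp [preprocess]⟩
  exact hxI (hC x (Multiset.mem_of_le hle hx))

end PreprocessShape

/-- Proposition 7.3: correctness of the preprocessing conversion. -/
theorem stmt12 (σ : Type) [DecidableEq σ] (P : PopComputer σ)
    (hb : Bounded P) (φ : Multiset σ → Bool) (hdec : Decides P φ) :
    ∃ (P' : PopComputer (σ ⊕ σ ⊕ Unit)) (β : σ → σ ⊕ σ ⊕ Unit),
      Set.InjOn β ↑P.I ∧ P'.I = P.I.image β ∧
      Bounded P' ∧
      (∀ CI : Multiset σ, IsInput P CI → HasOutput P' (CI.map β) (φ CI)) ∧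
      P'.Q.card ≤ P.Q.card + P.I.card + 1 ∧
      Multiset.card P'.H = Multiset.card P.H + 1 ∧
      (∑ t ∈ P'.δ, Multiset.card t.1) ≤ (∑ t ∈ P.δ, Multiset.card t.1) + 2 * P.I.card ∧
      (∀ t ∈ P'.δ, ∀ q ∈ P'.I, q ∉ t.2) ∧
      (∀ C : Multiset (σ ⊕ σ ⊕ Unit), IsInput P' C → Terminal P' C) ∧
      (∀ t ∈ P'.δ, ∀ q ∈ P'.I, t.1.count q ≤ 1) :=
  ⟨preprocess P, inCopy, Sum.inl_injective.injOn, rfl, bounded_preprocess hb,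
    fun CI hCI => hasOutput_preprocess hb hCI (hdec CI hCI), card_preprocess_Q_le P,
    card_preprocess_H P, sum_card_preprocess_δ_le P,
    fun _ ht _ hq => input_not_mem_snd_of_mem_preprocess_δ P ht hq,
    fun _ => terminal_of_isInput_preprocess P,
    fun _ ht _ hq => count_input_fst_le_one P ht hq⟩

end PaperPP
end
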